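/- arXiv:1706.00694 — 7 statements merged into one kernel-verified Lean document; each statement's English description precedes it below -/
import Mathlib

section
/- Every almost automorphic function f on the quantum time scale with values in a Banach space X is bounded, i.e., sup_{t ∈ T} ‖f(t)‖ < ∞. -/
open Filter Topology

/-- The quantum time scale `{q^n : n ∈ ℤ} ∪ {0}` as a subset of `ℝ`. -/
def qT (q : ℝ) : Set ℝ := {t | (∃ n : ℤ, t = q ^ n) ∨ t = 0}

/-- Almost automorphy on the quantum time scale. -/
def QAA {X : Type*} [NormedAddCommGroup X] (q : ℝ) (f : ℝ → X) : Prop :=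
  ∀ s : ℕ → ℤ, ∃ φ : ℕ → ℕ, StrictMono φ ∧ ∃ g : ℝ → X,
    (∀ t ∈ qT q, Tendsto (fun n => f (t * q ^ (s (φ n)))) atTop (𝓝 (g t))) ∧
    (∀ t ∈ qT q, Tendsto (fun n => g (t * q ^ (-(s (φ n))))) atTop (𝓝 (f t)))

theorem qaa_bounded {X : Type*} [NormedAddCommGroup X] [NormedSpace ℝ X] [CompleteSpace X]
    (q : ℝ) (hq : 1 < q) (f : ℝ → X) (hf : QAA q f) :
    ∃ M : ℝ, ∀ t ∈ qT q, ‖f t‖ ≤ M := by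
  by_contra h
  push_neg at h
  have hsel : ∀ k : ℕ, ∃ n : ℤ, (k : ℝ) < ‖f (q ^ n)‖ := by
    intro k
    obtain ⟨t, ht, hlt⟩ := h ((k : ℝ) + ‖f 0‖)
    rcases ht with ⟨n, rfl⟩ | rfl
    · exact ⟨n, lt_of_le_of_lt (le_add_of_nonneg_right (norm_nonneg _)) hlt⟩
    · exact absurd hlt (by push_neg; nlinarith [Nat.cast_nonneg (α := ℝ) k])
  choose s hs using hsel
  obtain ⟨φ, hφ, g, hg1, _⟩ := hf s
  have h1 : (1 : ℝ) ∈ qT q := Or.inl ⟨0, by simp⟩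
  have hten := (hg1 1 h1).norm
  simp only [one_mul] at hten
  obtain ⟨M, hM⟩ := hten.bddAbove_range
  obtain ⟨k, hk⟩ := exists_nat_gt M
  have h1 : (φ k : ℝ) < ‖f (q ^ (s (φ k)))‖ := hs (φ k)
  have h2 : ‖f (q ^ (s (φ k)))‖ ≤ M := hM ⟨k, rfl⟩
  have h3 : (k : ℝ) ≤ (φ k : ℝ) := by exact_mod_cast hφ.le_apply
  linarith
end

section
/- Let f : T → X be almost automorphic on the quantum time scale T and define f*(t) = f(t^{-1}) for t ∈ T \ {0}. If the limit f*(0) := lim_{n → -∞} f*(q^n) exists (so that f* extends continuously to T), then f* : T → X is almost automorphic. -/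
open Filter Topology

theorem qaa_inv {X : Type*} [NormedAddCommGroup X] [NormedSpace ℝ X] [CompleteSpace X]
    (q : ℝ) (hq : 1 < q) (f F : ℝ → X) (hf : QAA q f)
    (hF : ∀ t ∈ qT q, t ≠ 0 → F t = f t⁻¹)
    (hF0 : Tendsto (fun m : ℕ => f ((q : ℝ) ^ (m : ℤ))) atTop (𝓝 (F 0))) :
    QAA q F := by
  have hq0 : (0:ℝ) < q := lt_trans zero_lt_one hq
  have hqne : (q:ℝ) ≠ 0 := hq0.ne'
  intro s
  obtain ⟨φ, hφ, g, hg1, hg2⟩ := hf (fun n => -(s n))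
  refine ⟨φ, hφ, fun t => if t = 0 then F 0 else g t⁻¹, ?_, ?_⟩
  · intro t ht
    rcases ht with ⟨n, rfl⟩ | rfl
    · have hqn : (q:ℝ)^n ≠ 0 := zpow_ne_zero n hqne
      simp only [if_neg hqn]
      have key : ∀ m, F ((q:ℝ)^n * q ^ (s (φ m))) = f (((q:ℝ)^n)⁻¹ * q ^ (-(s (φ m)))) := by
        intro m
        rw [hF _ (Or.inl ⟨n + s (φ m), by rw [zpow_add₀ hqne]⟩)
          (by positivity)]
        rw [mul_inv]; simp [zpow_neg]
      simp only [key]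
      exact hg1 _ (Or.inl ⟨-n, by rw [zpow_neg]⟩)
    · simp only [zero_mul, if_pos rfl]
      exact tendsto_const_nhds
  · intro t ht
    rcases ht with ⟨n, rfl⟩ | rfl
    · have hqn : (q:ℝ)^n ≠ 0 := zpow_ne_zero n hqne
      have key : ∀ m, (fun t => if t = 0 then F 0 else g t⁻¹) ((q:ℝ)^n * q ^ (-(s (φ m))))
          = g (((q:ℝ)^n)⁻¹ * q ^ (-(-(s (φ m))))) := by
        intro m
        have h1 : (q:ℝ)^n * q ^ (-(s (φ m))) ≠ 0 := by positivity
        simp only [if_neg h1]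
        rw [mul_inv, neg_neg]; simp [zpow_neg]
      simp only [key]
      have := hg2 (((q:ℝ)^n)⁻¹) (Or.inl ⟨-n, by rw [zpow_neg]⟩)
      rw [hF _ (Or.inl ⟨n, rfl⟩) hqn, ← inv_inv ((q:ℝ)^n)] at *
      exact this
    · simp only [zero_mul, if_pos rfl]
      exact tendsto_const_nhds
end

section
/- Let f : T → X be almost automorphic on the quantum time scale. If there exists an integer n₀ such that f(q^n) = 0 for all n > n₀, then f(t) = 0 for all t ∈ T. -/
open Filter Topology

theorem qaa_eventually_zero {X : Type*} [NormedAddCommGroup X] [NormedSpace ℝ X]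
    [CompleteSpace X] (q : ℝ) (hq : 1 < q) (f : ℝ → X) (hf : QAA q f)
    (hcont : Tendsto (fun m : ℕ => f ((q : ℝ) ^ (-(m : ℤ)))) atTop (𝓝 (f 0)))
    (n₀ : ℤ) (h0 : ∀ n : ℤ, n₀ < n → f ((q : ℝ) ^ n) = 0) :
    ∀ t ∈ qT q, f t = 0 := by
  have hq0 : (q : ℝ) ≠ 0 := by linarith
  obtain ⟨φ, hφ, g, hg1, hg2⟩ := hf (fun n => (n : ℤ))
  have hmem : ∀ m : ℤ, (q : ℝ) ^ m ∈ qT q := fun m => Or.inl ⟨m, rfl⟩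
  -- g vanishes at every power of q
  have hgz : ∀ m : ℤ, g ((q : ℝ) ^ m) = 0 := by
    intro m
    have h1 := hg1 _ (hmem m)
    have h2 : Tendsto (fun n : ℕ => f ((q : ℝ) ^ m * q ^ ((φ n : ℤ)))) atTop (𝓝 (0 : X)) := by
      apply Tendsto.congr' _ tendsto_const_nhds
      filter_upwards [eventually_ge_atTop ((n₀ - m + 1).toNat)] with n hn
      have hn' : n₀ - m + 1 ≤ (n : ℤ) := le_trans (Int.self_le_toNat _) (by exact_mod_cast hn)
      have hφn : (n : ℤ) ≤ (φ n : ℤ) := by exact_mod_cast hφ.le_apply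
      rw [← zpow_add₀ hq0]
      exact (h0 _ (by omega)).symm
    exact (tendsto_nhds_unique h1 h2)
  -- hence f vanishes at every power of q
  have hfz : ∀ m : ℤ, f ((q : ℝ) ^ m) = 0 := by
    intro m
    have h1 := hg2 _ (hmem m)
    have h2 : Tendsto (fun n : ℕ => g ((q : ℝ) ^ m * q ^ (-(φ n : ℤ)))) atTop (𝓝 (0 : X)) := by
      apply Tendsto.congr _ tendsto_const_nhds
      intro n
      rw [← zpow_add₀ hq0]
      exact (hgz _).symm
    exact tendsto_nhds_unique h1 h2
  -- f 0 = 0 by continuity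
  have hf0 : f 0 = 0 := by
    have h2 : Tendsto (fun m : ℕ => f ((q : ℝ) ^ (-(m : ℤ)))) atTop (𝓝 (0 : X)) := by
      apply Tendsto.congr _ tendsto_const_nhds
      intro n
      exact (hfz _).symm
    exact tendsto_nhds_unique hcont h2
  rintro t (⟨n, rfl⟩ | rfl)
  · exact hfz n
  · exact hf0
end

section
/- The set AA(X) of all almost automorphic functions f : T → X on the quantum time scale, equipped with the supremum norm ‖f‖ = sup_{t ∈ T} ‖f(t)‖, is a Banach space (a closed subspace of the bounded continuous functions on T). -/
open Filter Topology

open Classical in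
/-- Extend a function on the quantum time scale (by `0`) to all of `ℝ`. -/
noncomputable def qExtend {X : Type*} [NormedAddCommGroup X] (q : ℝ)
    (F : BoundedContinuousFunction (qT q) X) : ℝ → X :=
  fun t => if h : t ∈ qT q then F ⟨t, h⟩ else 0

/-- Transfer of convergence along a "sub-selection". -/
theorem qaa_tendsto_helper {E : Type*} [PseudoMetricSpace E] {v w : ℕ → E} {a : E} (k : ℕ)
    (hv : Tendsto v atTop (𝓝 a)) (h : ∀ n, k ≤ n → ∃ m, n ≤ m ∧ w n = v m) :
    Tendsto w atTop (𝓝 a) := by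
  rw [Metric.tendsto_atTop] at hv ⊢
  intro ε hε
  obtain ⟨N, hN⟩ := hv ε hε
  refine ⟨max N k, fun n hn => ?_⟩
  obtain ⟨m, hm, he⟩ := h n (le_trans (le_max_right _ _) hn)
  rw [he]
  exact hN m (le_trans (le_trans (le_max_left _ _) hn) hm)

/-- A uniform limit of almost automorphic functions is almost automorphic. -/
theorem qaa_limit {X : Type*} [NormedAddCommGroup X] [CompleteSpace X] {q : ℝ} (hq : 1 < q)
    (Fk : ℕ → ℝ → X) (F : ℝ → X) (δ : ℕ → ℝ)
    (hFk : ∀ k, QAA q (Fk k)) (hδ : Tendsto δ atTop (𝓝 0)) (hδ0 : ∀ k, 0 ≤ δ k)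
    (hb : ∀ k, ∀ t ∈ qT q, ‖Fk k t - F t‖ ≤ δ k) : QAA q F := by
  have hq0 : (0:ℝ) < q := lt_trans one_pos hq
  have hmem : ∀ t ∈ qT q, ∀ j : ℤ, t * q ^ j ∈ qT q := by
    rintro t (⟨n, rfl⟩ | rfl) j
    · exact Or.inl ⟨n + j, by rw [zpow_add₀ (ne_of_gt hq0)]⟩
    · exact Or.inr (zero_mul _)
  intro s
  unfold QAA at hFk
  choose Φ hmono G hfor hback using hFk
  -- the nested subsequences
  let Ψ : ℕ → ℕ → ℕ := fun k => Nat.rec (Φ 0 s) (fun n prev => prev ∘ Φ (n+1) (s ∘ prev)) k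
  let σ : ℕ → ℕ → ℤ := fun k => Nat.rec s (fun n _ => s ∘ Ψ n) k
  have hΨmono : ∀ k, StrictMono (Ψ k) := by
    intro k
    induction k with
    | zero => exact hmono 0 s
    | succ n ih => exact ih.comp (hmono (n+1) (s ∘ Ψ n))
  have hkey : ∀ k, ∀ t ∈ qT q,
      Tendsto (fun m => Fk k (t * q ^ (s (Ψ k m)))) atTop (𝓝 (G k (σ k) t)) := by
    intro k t ht
    have h := hfor k (σ k) t ht
    have e : ∀ m, σ k (Φ k (σ k) m) = s (Ψ k m) := by
      cases k <;> intro m <;> rfl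
    simpa only [e] using h
  have hkeyb : ∀ k, ∀ t ∈ qT q,
      Tendsto (fun m => G k (σ k) (t * q ^ (-(s (Ψ k m))))) atTop (𝓝 (Fk k t)) := by
    intro k t ht
    have h := hback k (σ k) t ht
    have e : ∀ m, σ k (Φ k (σ k) m) = s (Ψ k m) := by
      cases k <;> intro m <;> rfl
    simpa only [e] using h
  -- the diagonal sequence
  let φd : ℕ → ℕ := fun n => Ψ n n
  have hφd : StrictMono φd := by
    apply strictMono_nat_of_lt_succ
    intro n
    have h1 : n + 1 ≤ Φ (n+1) (s ∘ Ψ n) (n + 1) := (hmono _ _).le_apply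
    calc Ψ n n < Ψ n (n+1) := hΨmono n (Nat.lt_succ_self n)
    _ ≤ Ψ n (Φ (n+1) (s ∘ Ψ n) (n+1)) := (hΨmono n).monotone h1
  have hclaim : ∀ k n, k ≤ n → ∀ j, n ≤ j → ∃ m, j ≤ m ∧ Ψ n j = Ψ k m := by
    intro k n hkn
    induction n, hkn using Nat.le_induction with
    | base => exact fun j _ => ⟨j, le_rfl, rfl⟩
    | succ n hn ih =>
      intro j hj
      have h1 : j ≤ Φ (n+1) (s ∘ Ψ n) j := (hmono _ _).le_apply
      obtain ⟨m, hm, he⟩ := ih (Φ (n+1) (s ∘ Ψ n) j)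
        (le_trans (le_trans (Nat.le_succ n) hj) h1)
      exact ⟨m, le_trans h1 hm, he⟩
  have hdiag : ∀ k n, k ≤ n → ∃ m, n ≤ m ∧ φd n = Ψ k m :=
    fun k n h => hclaim k n h n le_rfl
  -- convergence along the diagonal, for each k
  have hdfor : ∀ k, ∀ t ∈ qT q,
      Tendsto (fun n => Fk k (t * q ^ (s (φd n)))) atTop (𝓝 (G k (σ k) t)) := by
    intro k t ht
    refine qaa_tendsto_helper k (hkey k t ht) ?_
    intro n hn
    obtain ⟨m, hm, he⟩ := hdiag k n hn
    exact ⟨m, hm, by rw [show φd n = Ψ k m from he]⟩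
  have hdback : ∀ k, ∀ t ∈ qT q,
      Tendsto (fun n => G k (σ k) (t * q ^ (-(s (φd n))))) atTop (𝓝 (Fk k t)) := by
    intro k t ht
    refine qaa_tendsto_helper k (hkeyb k t ht) ?_
    intro n hn
    obtain ⟨m, hm, he⟩ := hdiag k n hn
    exact ⟨m, hm, by rw [show φd n = Ψ k m from he]⟩
  -- the limits G k (σ k) form a uniformly Cauchy family on qT q
  have hgb : ∀ k l, ∀ t ∈ qT q, ‖G k (σ k) t - G l (σ l) t‖ ≤ δ k + δ l := by
    intro k l t ht
    have h1 := hdfor k t ht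
    have h2 := hdfor l t ht
    have h3 : Tendsto (fun n => ‖Fk k (t * q ^ (s (φd n))) - Fk l (t * q ^ (s (φd n)))‖)
        atTop (𝓝 ‖G k (σ k) t - G l (σ l) t‖) := (h1.sub h2).norm
    refine le_of_tendsto' h3 ?_
    intro n
    have hu : t * q ^ (s (φd n)) ∈ qT q := hmem t ht _
    calc ‖Fk k (t * q ^ (s (φd n))) - Fk l (t * q ^ (s (φd n)))‖
        ≤ ‖Fk k (t * q ^ (s (φd n))) - F (t * q ^ (s (φd n)))‖ +
          ‖F (t * q ^ (s (φd n))) - Fk l (t * q ^ (s (φd n)))‖ := norm_sub_le_norm_sub_add_norm_sub _ _ _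
      _ ≤ δ k + δ l := by
          refine add_le_add (hb k _ hu) ?_
          rw [norm_sub_rev]
          exact hb l _ hu
  have hcauchy : ∀ t ∈ qT q, CauchySeq (fun k => G k (σ k) t) := by
    intro t ht
    rw [Metric.cauchySeq_iff]
    intro ε hε
    obtain ⟨N, hN⟩ := Metric.tendsto_atTop.mp hδ (ε/2) (by linarith)
    refine ⟨N, fun m hm n hn => ?_⟩
    have h1 : δ m < ε/2 := lt_of_le_of_lt (le_abs_self _) (by simpa [Real.dist_eq] using hN m hm)
    have h2 : δ n < ε/2 := lt_of_le_of_lt (le_abs_self _) (by simpa [Real.dist_eq] using hN n hn)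
    calc dist (G m (σ m) t) (G n (σ n) t) = ‖G m (σ m) t - G n (σ n) t‖ := dist_eq_norm _ _
      _ ≤ δ m + δ n := hgb m n t ht
      _ < ε := by linarith
  let g : ℝ → X := fun t => limUnder atTop (fun k => G k (σ k) t)
  have hglim : ∀ t ∈ qT q, Tendsto (fun k => G k (σ k) t) atTop (𝓝 (g t)) :=
    fun t ht => (hcauchy t ht).tendsto_limUnder
  have hgF : ∀ k, ∀ t ∈ qT q, ‖G k (σ k) t - g t‖ ≤ δ k := by
    intro k t ht
    have h1 : Tendsto (fun l => ‖G k (σ k) t - G l (σ l) t‖ - δ l) atTop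
        (𝓝 (‖G k (σ k) t - g t‖ - 0)) :=
      ((tendsto_const_nhds.sub (hglim t ht)).norm).sub hδ
    have h2 : ‖G k (σ k) t - g t‖ - 0 ≤ δ k := by
      refine le_of_tendsto' h1 ?_
      intro l
      have := hgb k l t ht
      linarith
    linarith
  refine ⟨φd, hφd, g, ?_, ?_⟩
  · -- forward convergence
    intro t ht
    rw [Metric.tendsto_atTop]
    intro ε hε
    obtain ⟨K, hK⟩ := Metric.tendsto_atTop.mp hδ (ε/3) (by linarith)
    have hδK : δ K < ε/3 := lt_of_le_of_lt (le_abs_self _)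
      (by simpa [Real.dist_eq] using hK K le_rfl)
    obtain ⟨N, hN⟩ := Metric.tendsto_atTop.mp (hdfor K t ht) (ε/3) (by linarith)
    refine ⟨N, fun n hn => ?_⟩
    have hu : t * q ^ (s (φd n)) ∈ qT q := hmem t ht _
    calc dist (F (t * q ^ (s (φd n)))) (g t)
        ≤ dist (F (t * q ^ (s (φd n)))) (Fk K (t * q ^ (s (φd n)))) +
          dist (Fk K (t * q ^ (s (φd n)))) (G K (σ K) t) +
          dist (G K (σ K) t) (g t) := dist_triangle4 _ _ _ _
      _ < ε/3 + ε/3 + ε/3 := by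
          refine add_lt_add_of_lt_of_le (add_lt_add_of_le_of_lt ?_ (hN n hn)) ?_
          · rw [dist_eq_norm, norm_sub_rev]
            exact le_of_lt (lt_of_le_of_lt (hb K _ hu) hδK)
          · rw [dist_eq_norm]
            exact le_of_lt (lt_of_le_of_lt (hgF K t ht) hδK)
      _ = ε := by ring
  · -- backward convergence
    intro t ht
    rw [Metric.tendsto_atTop]
    intro ε hε
    obtain ⟨K, hK⟩ := Metric.tendsto_atTop.mp hδ (ε/3) (by linarith)
    have hδK : δ K < ε/3 := lt_of_le_of_lt (le_abs_self _)
      (by simpa [Real.dist_eq] using hK K le_rfl)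
    obtain ⟨N, hN⟩ := Metric.tendsto_atTop.mp (hdback K t ht) (ε/3) (by linarith)
    refine ⟨N, fun n hn => ?_⟩
    have hu : t * q ^ (-(s (φd n))) ∈ qT q := hmem t ht _
    calc dist (g (t * q ^ (-(s (φd n))))) (F t)
        ≤ dist (g (t * q ^ (-(s (φd n))))) (G K (σ K) (t * q ^ (-(s (φd n))))) +
          dist (G K (σ K) (t * q ^ (-(s (φd n))))) (Fk K t) +
          dist (Fk K t) (F t) := dist_triangle4 _ _ _ _
      _ < ε/3 + ε/3 + ε/3 := by
          refine add_lt_add_of_lt_of_le (add_lt_add_of_le_of_lt ?_ (hN n hn)) ?_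
          · rw [dist_comm, dist_eq_norm]
            exact le_of_lt (lt_of_le_of_lt (hgF K _ hu) hδK)
          · rw [dist_eq_norm]
            exact le_of_lt (lt_of_le_of_lt (hb K t ht) hδK)
      _ = ε := by ring

/-- The set of almost automorphic functions, viewed inside the Banach space of
bounded continuous functions on the quantum time scale with the sup norm, is a
closed (hence complete, i.e. Banach) subspace. -/
theorem qaa_isClosed_and_complete {X : Type*} [NormedAddCommGroup X] [NormedSpace ℝ X]
    [CompleteSpace X] (q : ℝ) (hq : 1 < q) :
    IsClosed {F : BoundedContinuousFunction (qT q) X | QAA q (qExtend q F)} ∧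
    IsComplete {F : BoundedContinuousFunction (qT q) X | QAA q (qExtend q F)} := by
  have hcl : IsClosed {F : BoundedContinuousFunction (qT q) X | QAA q (qExtend q F)} := by
    apply IsSeqClosed.isClosed
    intro u F hu hF
    refine qaa_limit hq (fun k => qExtend q (u k)) (qExtend q F) (fun k => dist (u k) F)
      hu (tendsto_iff_dist_tendsto_zero.mp hF) (fun k => dist_nonneg) ?_
    intro k t ht
    simp only [qExtend, dif_pos ht]
    rw [← dist_eq_norm]
    exact BoundedContinuousFunction.dist_coe_le_dist (f := u k) (g := F) ⟨t, ht⟩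
  exact ⟨hcl, hcl.isComplete⟩
end

section
/- Let f : T × X → X be almost automorphic in t for each x ∈ X and Lipschitz in x uniformly in t (with constant L). Let φ : T → X be almost automorphic. Then F : T → X defined by F(t) = f(t, φ(t)) is almost automorphic. -/
open Filter Topology

/-- Almost automorphy in `t`, for each `x`, of a function of two variables. -/
def QAA2 {X : Type*} [NormedAddCommGroup X] (q : ℝ) (f : ℝ → X → X) : Prop :=
  ∀ s : ℕ → ℤ, ∃ φ : ℕ → ℕ, StrictMono φ ∧ ∃ g : ℝ → X → X,
    (∀ t ∈ qT q, ∀ x : X, Tendsto (fun n => f (t * q ^ (s (φ n))) x) atTop (𝓝 (g t x))) ∧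
    (∀ t ∈ qT q, ∀ x : X, Tendsto (fun n => g (t * q ^ (-(s (φ n)))) x) atTop (𝓝 (f t x)))

theorem qaa2_comp {X : Type*} [NormedAddCommGroup X] [NormedSpace ℝ X] [CompleteSpace X]
    (q : ℝ) (hq : 1 < q) (f : ℝ → X → X) (hf : QAA2 q f)
    (L : ℝ) (hL : 0 < L)
    (hLip : ∀ t ∈ qT q, ∀ x y : X, ‖f t x - f t y‖ ≤ L * ‖x - y‖)
    (φ : ℝ → X) (hφ : QAA q φ) :
    QAA q (fun t => f t (φ t)) := by
  intro s
  obtain ⟨φ₁, hφ₁, g, hg1, hg2⟩ := hf s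
  obtain ⟨φ₂, hφ₂, ψ, hψ1, hψ2⟩ := hφ (s ∘ φ₁)
  have hq0 : (0:ℝ) < q := lt_trans one_pos hq
  have hmem : ∀ t ∈ qT q, ∀ m : ℤ, t * q ^ m ∈ qT q := by
    intro t ht m
    rcases ht with ⟨n, rfl⟩ | rfl
    · exact Or.inl ⟨n + m, by rw [zpow_add₀ hq0.ne']⟩
    · exact Or.inr (zero_mul _)
  have hgLip : ∀ t ∈ qT q, ∀ x y : X, ‖g t x - g t y‖ ≤ L * ‖x - y‖ := by
    intro t ht x y
    have h2 : Tendsto (fun n => ‖f (t * q ^ s (φ₁ n)) x - f (t * q ^ s (φ₁ n)) y‖)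
        atTop (𝓝 ‖g t x - g t y‖) := ((hg1 t ht x).sub (hg1 t ht y)).norm
    exact le_of_tendsto h2 (Eventually.of_forall fun n => hLip _ (hmem t ht _) x y)
  refine ⟨φ₁ ∘ φ₂, hφ₁.comp hφ₂, fun t => g t (ψ t), ?_, ?_⟩
  · intro t ht
    rw [tendsto_iff_norm_sub_tendsto_zero]
    have hb : ∀ n : ℕ,
        ‖f (t * q ^ s ((φ₁ ∘ φ₂) n)) (φ (t * q ^ s ((φ₁ ∘ φ₂) n))) - g t (ψ t)‖ ≤
        L * ‖φ (t * q ^ s ((φ₁ ∘ φ₂) n)) - ψ t‖ +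
        ‖f (t * q ^ s ((φ₁ ∘ φ₂) n)) (ψ t) - g t (ψ t)‖ := by
      intro n
      calc ‖f (t * q ^ s ((φ₁ ∘ φ₂) n)) (φ (t * q ^ s ((φ₁ ∘ φ₂) n))) - g t (ψ t)‖
          ≤ ‖f (t * q ^ s ((φ₁ ∘ φ₂) n)) (φ (t * q ^ s ((φ₁ ∘ φ₂) n))) -
              f (t * q ^ s ((φ₁ ∘ φ₂) n)) (ψ t)‖ +
            ‖f (t * q ^ s ((φ₁ ∘ φ₂) n)) (ψ t) - g t (ψ t)‖ :=
            norm_sub_le_norm_sub_add_norm_sub _ _ _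
        _ ≤ L * ‖φ (t * q ^ s ((φ₁ ∘ φ₂) n)) - ψ t‖ +
            ‖f (t * q ^ s ((φ₁ ∘ φ₂) n)) (ψ t) - g t (ψ t)‖ := by
            gcongr
            exact hLip _ (hmem t ht _) _ _
    have h1 : Tendsto (fun n => L * ‖φ (t * q ^ s ((φ₁ ∘ φ₂) n)) - ψ t‖) atTop (𝓝 0) := by
      have := (tendsto_iff_norm_sub_tendsto_zero.mp (hψ1 t ht)).const_mul L
      simpa using this
    have h2 : Tendsto (fun n => ‖f (t * q ^ s ((φ₁ ∘ φ₂) n)) (ψ t) - g t (ψ t)‖)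
        atTop (𝓝 0) := by
      have := tendsto_iff_norm_sub_tendsto_zero.mp
        ((hg1 t ht (ψ t)).comp hφ₂.tendsto_atTop)
      simpa [Function.comp] using this
    have := h1.add h2
    rw [add_zero] at this
    exact squeeze_zero (fun n => norm_nonneg _) hb this
  · intro t ht
    rw [tendsto_iff_norm_sub_tendsto_zero]
    have hb : ∀ n : ℕ,
        ‖g (t * q ^ (-(s ((φ₁ ∘ φ₂) n)))) (ψ (t * q ^ (-(s ((φ₁ ∘ φ₂) n))))) - f t (φ t)‖ ≤
        L * ‖ψ (t * q ^ (-(s ((φ₁ ∘ φ₂) n)))) - φ t‖ +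
        ‖g (t * q ^ (-(s ((φ₁ ∘ φ₂) n)))) (φ t) - f t (φ t)‖ := by
      intro n
      calc ‖g (t * q ^ (-(s ((φ₁ ∘ φ₂) n)))) (ψ (t * q ^ (-(s ((φ₁ ∘ φ₂) n))))) - f t (φ t)‖
          ≤ ‖g (t * q ^ (-(s ((φ₁ ∘ φ₂) n)))) (ψ (t * q ^ (-(s ((φ₁ ∘ φ₂) n))))) -
              g (t * q ^ (-(s ((φ₁ ∘ φ₂) n)))) (φ t)‖ +
            ‖g (t * q ^ (-(s ((φ₁ ∘ φ₂) n)))) (φ t) - f t (φ t)‖ :=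
            norm_sub_le_norm_sub_add_norm_sub _ _ _
        _ ≤ L * ‖ψ (t * q ^ (-(s ((φ₁ ∘ φ₂) n)))) - φ t‖ +
            ‖g (t * q ^ (-(s ((φ₁ ∘ φ₂) n)))) (φ t) - f t (φ t)‖ := by
            gcongr
            exact hgLip _ (hmem t ht _) _ _
    have h1 : Tendsto (fun n => L * ‖ψ (t * q ^ (-(s ((φ₁ ∘ φ₂) n)))) - φ t‖) atTop (𝓝 0) := by
      have := (tendsto_iff_norm_sub_tendsto_zero.mp (hψ2 t ht)).const_mul L
      simpa using this
    have h2 : Tendsto (fun n => ‖g (t * q ^ (-(s ((φ₁ ∘ φ₂) n)))) (φ t) - f t (φ t)‖)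
        atTop (𝓝 0) := by
      have := tendsto_iff_norm_sub_tendsto_zero.mp
        ((hg2 t ht (φ t)).comp hφ₂.tendsto_atTop)
      simpa [Function.comp] using this
    have := h1.add h2
    rw [add_zero] at this
    exact squeeze_zero (fun n => norm_nonneg _) hb this
end

section
/- A continuous function f : T → X on the quantum time scale is almost automorphic (in the sense of Definition: subsequential limits via multiplicative shifts t ↦ t·q^{s_n}) if and only if the function f̃ : ℤ ∪ {−∞} → X defined by f̃(n) = f(q^n) for n ∈ ℤ and f̃(−∞) = f(0) is almost automorphic in the discrete sense, where shifts act by n + s on ℤ and fix −∞. -/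
open Filter Topology

/-- Discrete almost automorphy on the generalized integers `ℤ ∪ {−∞}` (modelled as
`WithBot ℤ`), where shifts act by addition on `ℤ` and fix `−∞` (note `⊥ + c = ⊥`). -/
def DAA {X : Type*} [NormedAddCommGroup X] (F : WithBot ℤ → X) : Prop :=
  ∀ s : ℕ → ℤ, ∃ φ : ℕ → ℕ, StrictMono φ ∧ ∃ G : WithBot ℤ → X,
    (∀ m : WithBot ℤ, Tendsto (fun n => F (m + ((s (φ n) : ℤ) : WithBot ℤ))) atTop (𝓝 (G m))) ∧
    (∀ m : WithBot ℤ, Tendsto (fun n => G (m + ((-(s (φ n)) : ℤ) : WithBot ℤ))) atTop (𝓝 (F m)))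

/-!
The map `ℤ ∪ {−∞} → T`, `n ↦ q^n`, `−∞ ↦ 0`, is a bijection that turns the additive shift
`m ↦ m + s` into the multiplicative shift `t ↦ t·q^s` (since `q^(m+s) = q^m·q^s` and `0·q^s = 0`).
Since it is injective, every `G : ℤ ∪ {−∞} → X` is of the form `g ∘ (n ↦ q^n)`, so the limit
functions of the two definitions correspond to each other as well.
-/

noncomputable def qExp (q : ℝ) : WithBot ℤ → ℝ := WithBot.recBotCoe 0 (fun n : ℤ => q ^ n)

@[simp] lemma qExp_bot (q : ℝ) : qExp q ⊥ = 0 := rfl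

@[simp] lemma qExp_coe (q : ℝ) (n : ℤ) : qExp q n = q ^ n := rfl

lemma range_qExp (q : ℝ) : Set.range (qExp q) = qT q := by
  ext t
  constructor
  · rintro ⟨m, rfl⟩
    induction m using WithBot.recBotCoe with
    | bot => exact Or.inr rfl
    | coe n => exact Or.inl ⟨n, rfl⟩
  · rintro (⟨n, rfl⟩ | rfl)
    exacts [⟨n, rfl⟩, ⟨⊥, rfl⟩]

lemma qExp_add_coe {q : ℝ} (hq : q ≠ 0) (m : WithBot ℤ) (s : ℤ) :
    qExp q (m + s) = qExp q m * q ^ s := by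
  induction m using WithBot.recBotCoe with
  | bot => simp
  | coe n => simp [← WithBot.coe_add, zpow_add₀ hq]

lemma qExp_injective {q : ℝ} (hq : 1 < q) : Function.Injective (qExp q) := by
  have hq0 : 0 < q := zero_lt_one.trans hq
  intro m m' h
  induction m using WithBot.recBotCoe <;> induction m' using WithBot.recBotCoe
  · rfl
  all_goals simp only [qExp_bot, qExp_coe] at h
  · exact absurd h.symm (zpow_ne_zero _ hq0.ne')
  · exact absurd h (zpow_ne_zero _ hq0.ne')
  · exact congrArg _ (zpow_right_injective₀ hq0 hq.ne' h)

lemma forall_qT_tendsto_iff {X : Type*} [TopologicalSpace X] {q : ℝ} (hq : q ≠ 0)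
    (u : ℕ → ℤ) (f g : ℝ → X) :
    (∀ t ∈ qT q, Tendsto (fun n => f (t * q ^ u n)) atTop (𝓝 (g t))) ↔
      ∀ m : WithBot ℤ, Tendsto (fun n => (f ∘ qExp q) (m + (u n : WithBot ℤ))) atTop
        (𝓝 ((g ∘ qExp q) m)) := by
  simp only [← range_qExp, Set.forall_mem_range, Function.comp_apply, qExp_add_coe hq]

theorem qaa_iff_daa_comp_qExp {X : Type*} [NormedAddCommGroup X] {q : ℝ} (hq : 1 < q)
    (f : ℝ → X) : QAA q f ↔ DAA (f ∘ qExp q) := by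
  simp only [QAA, DAA, forall_qT_tendsto_iff (zero_lt_one.trans hq).ne',
    (qExp_injective hq).surjective_comp_right.exists]

lemma recBotCoe_eq_comp_qExp {X : Type*} (q : ℝ) (f : ℝ → X) :
    (fun m : WithBot ℤ => WithBot.recBotCoe (f 0) (fun n : ℤ => f (q ^ n)) m) = f ∘ qExp q := by
  funext m
  induction m using WithBot.recBotCoe <;> rfl

theorem qaa_iff_daa_general {X : Type*} [NormedAddCommGroup X]
    (q : ℝ) (hq : 1 < q) (f : ℝ → X) :
    QAA q f ↔ DAA (fun m : WithBot ℤ => (WithBot.recBotCoe (f 0) (fun n : ℤ => f (q ^ n)) m : X)) := by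
  rw [recBotCoe_eq_comp_qExp]
  exact qaa_iff_daa_comp_qExp hq f

theorem qaa_iff_daa {X : Type*} [NormedAddCommGroup X] [NormedSpace ℝ X] [CompleteSpace X]
    (q : ℝ) (hq : 1 < q) (f : ℝ → X)
    (hcont : Tendsto (fun m : ℕ => f ((q : ℝ) ^ (-(m : ℤ)))) atTop (𝓝 (f 0))) :
    QAA q f ↔ DAA (fun m : WithBot ℤ => (WithBot.recBotCoe (f 0) (fun n : ℤ => f (q ^ n)) m : X)) :=
  qaa_iff_daa_general q hq f
end

section
/- Consider the nonhomogeneous linear difference system x(k+1) = A(k)x(k) + f(k) on ℤ, where A(k) are invertible n×n matrices. Suppose the homogeneous system x(k+1) = A(k)x(k) with principal fundamental matrix U(k) admits an exponential dichotomy: there exist a projection P commuting with U(k) and constants η, ν, α, β > 0 such that ‖U(k)P U(l)^{-1}‖ ≤ η e^{−α(k−l)} for k ≥ l and ‖U(k)(I−P)U(l)^{-1}‖ ≤ ν e^{−β(l−k)} for l ≥ k. Then the bounded solution given by x(k) = Σ_{l=−∞}^{k−1} U(k)P U(l+1)^{-1} f(l) − Σ_{l=k}^{∞} U(k)(I−P)U(l+1)^{-1}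 f(l) is well defined for every bounded f : ℤ → ℝ^n, satisfies ‖x‖_∞ ≤ (η e^{α}/(1−e^{−α}) + ν e^{β}/(1−e^{−β}))‖f‖_∞, and solves the nonhomogeneous system. -/
open Filter Topology

/-- The candidate bounded solution of `x(k+1) = A k (x k) + f k` under an exponential
dichotomy: `x k = ∑_{l<k} U k P U(l+1)⁻¹ f l − ∑_{l≥k} U k (I−P) U(l+1)⁻¹ f l`. -/
noncomputable def dichSol {n : ℕ}
    (U Uinv : ℤ → (EuclideanSpace ℝ (Fin n) →L[ℝ] EuclideanSpace ℝ (Fin n)))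
    (P : EuclideanSpace ℝ (Fin n) →L[ℝ] EuclideanSpace ℝ (Fin n))
    (f : ℤ → EuclideanSpace ℝ (Fin n)) (k : ℤ) : EuclideanSpace ℝ (Fin n) :=
  (∑' l : ℤ, if l < k then (U k) (P ((Uinv (l + 1)) (f l))) else 0) -
    (∑' l : ℤ, if k ≤ l then (U k) ((1 - P) ((Uinv (l + 1)) (f l))) else 0)

theorem exponential_dichotomy_bounded_solution {n : ℕ}
    (A U Uinv : ℤ → (EuclideanSpace ℝ (Fin n) →L[ℝ] EuclideanSpace ℝ (Fin n)))
    (P : EuclideanSpace ℝ (Fin n) →L[ℝ] EuclideanSpace ℝ (Fin n))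
    (η ν α β : ℝ) (hη : 0 < η) (hν : 0 < ν) (hα : 0 < α) (hβ : 0 < β)
    -- `U` is the principal fundamental matrix of `x(k+1) = A(k) x(k)`, `A(k)` invertible
    (hU0 : U 0 = 1)
    (hUrec : ∀ k : ℤ, U (k + 1) = (A k).comp (U k))
    (hUinv₁ : ∀ k : ℤ, (U k).comp (Uinv k) = 1)
    (hUinv₂ : ∀ k : ℤ, (Uinv k).comp (U k) = 1)
    -- `P` is a projection commuting with `U(k)`
    (hP : P.comp P = P)
    (hPU : ∀ k : ℤ, (U k).comp P = P.comp (U k))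
    -- exponential dichotomy estimates
    (hdich₁ : ∀ k l : ℤ, l ≤ k →
      ‖(U k).comp (P.comp (Uinv l))‖ ≤ η * Real.exp (-α * (k - l)))
    (hdich₂ : ∀ k l : ℤ, k ≤ l →
      ‖(U k).comp ((1 - P).comp (Uinv l))‖ ≤ ν * Real.exp (-β * (l - k)))
    -- `f` is bounded
    (f : ℤ → EuclideanSpace ℝ (Fin n)) (M : ℝ) (hf : ∀ k : ℤ, ‖f k‖ ≤ M) :
    (∀ k : ℤ, Summable (fun l : ℤ => if l < k then (U k) (P ((Uinv (l + 1)) (f l))) else 0)) ∧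
    (∀ k : ℤ, Summable (fun l : ℤ =>
      if k ≤ l then (U k) ((1 - P) ((Uinv (l + 1)) (f l))) else 0)) ∧
    (∀ k : ℤ, ‖dichSol U Uinv P f k‖ ≤
      (η * Real.exp α / (1 - Real.exp (-α)) + ν * Real.exp β / (1 - Real.exp (-β))) * M) ∧
    (∀ k : ℤ, dichSol U Uinv P f (k + 1) = (A k) (dichSol U Uinv P f k) + f k) := by
  classical
  have hM0 : 0 ≤ M := (norm_nonneg _).trans (hf 0)
  have hr1pos : 0 < Real.exp (-α) := Real.exp_pos _
  have hr1lt : Real.exp (-α) < 1 := Real.exp_lt_one_iff.mpr (by linarith)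
  have hr2pos : 0 < Real.exp (-β) := Real.exp_pos _
  have hr2lt : Real.exp (-β) < 1 := Real.exp_lt_one_iff.mpr (by linarith)
  have hea : (1:ℝ) ≤ Real.exp α := Real.one_le_exp hα.le
  have heb : (1:ℝ) ≤ Real.exp β := Real.one_le_exp hβ.le
  -- termwise bounds
  have hb1 : ∀ k l : ℤ, l < k →
      ‖(U k) (P ((Uinv (l + 1)) (f l)))‖
        ≤ η * Real.exp α * M * Real.exp (-α) ^ (k - 1 - l).toNat := by
    intro k l hlk
    have h1 : ‖(U k) (P ((Uinv (l + 1)) (f l)))‖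
        ≤ ‖(U k).comp (P.comp (Uinv (l + 1)))‖ * ‖f l‖ :=
      ((U k).comp (P.comp (Uinv (l + 1)))).le_opNorm (f l)
    have h2 := hdich₁ k (l + 1) (by omega)
    push_cast at h2
    have hZ : ((k - 1 - l).toNat : ℤ) = k - 1 - l := Int.toNat_of_nonneg (by omega)
    have hn : ((k : ℝ) - ((l : ℝ) + 1)) = ((k - 1 - l).toNat : ℝ) := by
      have := congrArg (fun z : ℤ => (z : ℝ)) hZ
      push_cast at this
      linarith
    have hexp : Real.exp (-α * ((k : ℝ) - ((l : ℝ) + 1)))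
        = Real.exp (-α) ^ (k - 1 - l).toNat := by
      rw [hn, mul_comm, Real.exp_nat_mul]
    have h3 : ‖(U k) (P ((Uinv (l + 1)) (f l)))‖
        ≤ η * M * Real.exp (-α) ^ (k - 1 - l).toNat := by
      calc ‖(U k) (P ((Uinv (l + 1)) (f l)))‖
          ≤ ‖(U k).comp (P.comp (Uinv (l + 1)))‖ * ‖f l‖ := h1
        _ ≤ (η * Real.exp (-α * ((k : ℝ) - ((l : ℝ) + 1)))) * M :=
            mul_le_mul h2 (hf l) (norm_nonneg _) (by positivity)
        _ = η * M * Real.exp (-α) ^ (k - 1 - l).toNat := by rw [hexp]; ring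
    have h4 : η * M ≤ η * Real.exp α * M := by nlinarith [mul_nonneg hη.le hM0]
    calc ‖(U k) (P ((Uinv (l + 1)) (f l)))‖
        ≤ η * M * Real.exp (-α) ^ (k - 1 - l).toNat := h3
      _ ≤ η * Real.exp α * M * Real.exp (-α) ^ (k - 1 - l).toNat :=
          mul_le_mul_of_nonneg_right h4 (pow_nonneg hr1pos.le _)
  have hb2 : ∀ k l : ℤ, k ≤ l →
      ‖(U k) ((1 - P) ((Uinv (l + 1)) (f l)))‖
        ≤ ν * Real.exp β * M * Real.exp (-β) ^ (l - k).toNat := by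
    intro k l hkl
    have h1 : ‖(U k) ((1 - P) ((Uinv (l + 1)) (f l)))‖
        ≤ ‖(U k).comp ((1 - P).comp (Uinv (l + 1)))‖ * ‖f l‖ :=
      ((U k).comp ((1 - P).comp (Uinv (l + 1)))).le_opNorm (f l)
    have h2 := hdich₂ k (l + 1) (by omega)
    push_cast at h2
    have hZ : ((l - k).toNat : ℤ) = l - k := Int.toNat_of_nonneg (by omega)
    have hn : ((l : ℝ) + 1 - (k : ℝ)) = (((l - k).toNat : ℝ) + 1) := by
      have := congrArg (fun z : ℤ => (z : ℝ)) hZ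
      push_cast at this
      linarith
    have hexp : Real.exp (-β * ((l : ℝ) + 1 - (k : ℝ)))
        = Real.exp (-β) ^ ((l - k).toNat + 1) := by
      rw [hn]
      have : ((l - k).toNat : ℝ) + 1 = (((l - k).toNat + 1 : ℕ) : ℝ) := by push_cast; ring
      rw [this, mul_comm, Real.exp_nat_mul]
    have h3 : ‖(U k) ((1 - P) ((Uinv (l + 1)) (f l)))‖
        ≤ ν * M * Real.exp (-β) ^ ((l - k).toNat + 1) := by
      calc ‖(U k) ((1 - P) ((Uinv (l + 1)) (f l)))‖
          ≤ ‖(U k).comp ((1 - P).comp (Uinv (l + 1)))‖ * ‖f l‖ := h1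
        _ ≤ (ν * Real.exp (-β * ((l : ℝ) + 1 - (k : ℝ)))) * M :=
            mul_le_mul h2 (hf l) (norm_nonneg _) (by positivity)
        _ = ν * M * Real.exp (-β) ^ ((l - k).toNat + 1) := by rw [hexp]; ring
    have h4 : ν * M * Real.exp (-β) ≤ ν * Real.exp β * M := by
      nlinarith [mul_nonneg hν.le hM0]
    calc ‖(U k) ((1 - P) ((Uinv (l + 1)) (f l)))‖
        ≤ ν * M * Real.exp (-β) ^ ((l - k).toNat + 1) := h3
      _ = (ν * M * Real.exp (-β)) * Real.exp (-β) ^ (l - k).toNat := by ring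
      _ ≤ (ν * Real.exp β * M) * Real.exp (-β) ^ (l - k).toNat :=
          mul_le_mul_of_nonneg_right h4 (pow_nonneg hr2pos.le _)
  -- geometric bound sums
  have hgeo1 : ∀ k : ℤ, HasSum
      (fun l : ℤ => if l < k then
        η * Real.exp α * M * Real.exp (-α) ^ (k - 1 - l).toNat else 0)
      (η * Real.exp α * M * (1 - Real.exp (-α))⁻¹) := by
    intro k
    have he : Function.Injective (fun m : ℕ => k - 1 - (m : ℤ)) := by
      intro a b hab
      simp only at hab
      omega
    rw [← he.hasSum_iff]
    · have hfe : ((fun l : ℤ => if l < k then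
          η * Real.exp α * M * Real.exp (-α) ^ (k - 1 - l).toNat else 0)
            ∘ (fun m : ℕ => k - 1 - (m : ℤ)))
          = fun m : ℕ => η * Real.exp α * M * Real.exp (-α) ^ m := by
        funext m
        simp only [Function.comp]
        rw [if_pos (by omega)]
        have hm : (k - 1 - (k - 1 - (m : ℤ))).toNat = m := by omega
        rw [hm]
      rw [hfe]
      exact (hasSum_geometric_of_lt_one hr1pos.le hr1lt).mul_left _
    · intro x hx
      rw [if_neg]
      intro hlt
      exact hx ⟨(k - 1 - x).toNat, by simp only; omega⟩
  have hgeo2 : ∀ k : ℤ, HasSum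
      (fun l : ℤ => if k ≤ l then
        ν * Real.exp β * M * Real.exp (-β) ^ (l - k).toNat else 0)
      (ν * Real.exp β * M * (1 - Real.exp (-β))⁻¹) := by
    intro k
    have he : Function.Injective (fun m : ℕ => k + (m : ℤ)) := by
      intro a b hab
      simp only at hab
      omega
    rw [← he.hasSum_iff]
    · have hfe : ((fun l : ℤ => if k ≤ l then
          ν * Real.exp β * M * Real.exp (-β) ^ (l - k).toNat else 0)
            ∘ (fun m : ℕ => k + (m : ℤ)))
          = fun m : ℕ => ν * Real.exp β * M * Real.exp (-β) ^ m := by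
        funext m
        simp only [Function.comp]
        rw [if_pos (by omega)]
        have hm : (k + (m : ℤ) - k).toNat = m := by omega
        rw [hm]
      rw [hfe]
      exact (hasSum_geometric_of_lt_one hr2pos.le hr2lt).mul_left _
    · intro x hx
      rw [if_neg]
      intro hle
      exact hx ⟨(x - k).toNat, by simp only; omega⟩
  -- norm comparison for the two series
  have hcmp1 : ∀ k l : ℤ, ‖(if l < k then (U k) (P ((Uinv (l + 1)) (f l))) else 0)‖
      ≤ (if l < k then η * Real.exp α * M * Real.exp (-α) ^ (k - 1 - l).toNat else 0) := by
    intro k l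
    by_cases h : l < k
    · simpa only [if_pos h] using hb1 k l h
    · simp [h]
  have hcmp2 : ∀ k l : ℤ, ‖(if k ≤ l then (U k) ((1 - P) ((Uinv (l + 1)) (f l))) else 0)‖
      ≤ (if k ≤ l then ν * Real.exp β * M * Real.exp (-β) ^ (l - k).toNat else 0) := by
    intro k l
    by_cases h : k ≤ l
    · simpa only [if_pos h] using hb2 k l h
    · simp [h]
  have hS1 : ∀ k : ℤ,
      Summable (fun l : ℤ => if l < k then (U k) (P ((Uinv (l + 1)) (f l))) else 0) :=
    fun k => Summable.of_norm_bounded (hgeo1 k).summable (hcmp1 k)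
  have hS2 : ∀ k : ℤ, Summable (fun l : ℤ =>
      if k ≤ l then (U k) ((1 - P) ((Uinv (l + 1)) (f l))) else 0) :=
    fun k => Summable.of_norm_bounded (hgeo2 k).summable (hcmp2 k)
  refine ⟨hS1, hS2, ?_, ?_⟩
  · -- norm bound
    intro k
    have h1 : ‖∑' l : ℤ, (if l < k then (U k) (P ((Uinv (l + 1)) (f l))) else 0)‖
        ≤ η * Real.exp α * M * (1 - Real.exp (-α))⁻¹ :=
      tsum_of_norm_bounded (hgeo1 k) (hcmp1 k)
    have h2 : ‖∑' l : ℤ, (if k ≤ l then (U k) ((1 - P) ((Uinv (l + 1)) (f l))) else 0)‖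
        ≤ ν * Real.exp β * M * (1 - Real.exp (-β))⁻¹ :=
      tsum_of_norm_bounded (hgeo2 k) (hcmp2 k)
    calc ‖dichSol U Uinv P f k‖
        ≤ ‖∑' l : ℤ, (if l < k then (U k) (P ((Uinv (l + 1)) (f l))) else 0)‖
          + ‖∑' l : ℤ, (if k ≤ l then (U k) ((1 - P) ((Uinv (l + 1)) (f l))) else 0)‖ :=
          norm_sub_le _ _
      _ ≤ η * Real.exp α * M * (1 - Real.exp (-α))⁻¹
          + ν * Real.exp β * M * (1 - Real.exp (-β))⁻¹ := add_le_add h1 h2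
      _ = (η * Real.exp α / (1 - Real.exp (-α)) + ν * Real.exp β / (1 - Real.exp (-β))) * M := by
          ring
  · -- the recurrence
    intro k
    have hsingle : ∀ (g : ℤ → EuclideanSpace ℝ (Fin n)),
        Summable (fun l : ℤ => if l = k then g l else 0) := by
      intro g
      apply summable_of_ne_finset_zero (s := ({k} : Finset ℤ))
      intro b hb
      simp only [Finset.mem_singleton] at hb
      simp [hb]
    have htsingle : ∀ (g : ℤ → EuclideanSpace ℝ (Fin n)),
        (∑' l : ℤ, if l = k then g l else 0) = g k := by
      intro g
      have : (fun l : ℤ => if l = k then g l else 0)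
          = fun l : ℤ => if l = k then g k else 0 := by
        funext l
        by_cases h : l = k
        · subst h; simp
        · simp [h]
      rw [this, tsum_ite_eq]
    -- pointwise decompositions
    have hpt1 : ∀ l : ℤ, (if l < k + 1 then (U k) (P ((Uinv (l + 1)) (f l))) else 0)
        = (if l < k then (U k) (P ((Uinv (l + 1)) (f l))) else 0)
          + (if l = k then (U k) (P ((Uinv (l + 1)) (f l))) else 0) := by
      intro l
      rcases lt_trichotomy l k with h | h | h
      · rw [if_pos (by omega), if_pos h, if_neg (by omega), add_zero]
      · rw [if_pos (by omega), if_neg (by omega), if_pos h, zero_add]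
      · rw [if_neg (by omega), if_neg (by omega), if_neg (by omega), add_zero]
    have hpt2 : ∀ l : ℤ, (if k + 1 ≤ l then (U k) ((1 - P) ((Uinv (l + 1)) (f l))) else 0)
        = (if k ≤ l then (U k) ((1 - P) ((Uinv (l + 1)) (f l))) else 0)
          - (if l = k then (U k) ((1 - P) ((Uinv (l + 1)) (f l))) else 0) := by
      intro l
      rcases lt_trichotomy l k with h | h | h
      · rw [if_neg (by omega), if_neg (by omega), if_neg (by omega), sub_zero]
      · rw [if_neg (by omega), if_pos (by omega), if_pos h, sub_self]
      · rw [if_pos (by omega), if_pos (by omega), if_neg (by omega), sub_zero]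
    -- mixed summability
    have hS1' : Summable (fun l : ℤ => if l < k + 1 then (U k) (P ((Uinv (l + 1)) (f l))) else 0) :=
      ((hS1 k).add (hsingle _)).congr (fun l => (hpt1 l).symm)
    have hS2' : Summable (fun l : ℤ =>
        if k + 1 ≤ l then (U k) ((1 - P) ((Uinv (l + 1)) (f l))) else 0) :=
      ((hS2 k).sub (hsingle _)).congr (fun l => (hpt2 l).symm)
    -- tsum decompositions
    have T1 : (∑' l : ℤ, if l < k + 1 then (U k) (P ((Uinv (l + 1)) (f l))) else 0)
        = (∑' l : ℤ, if l < k then (U k) (P ((Uinv (l + 1)) (f l))) else 0)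
          + (U k) (P ((Uinv (k + 1)) (f k))) := by
      rw [tsum_congr hpt1, Summable.tsum_add (hS1 k) (hsingle _), htsingle]
    have T2 : (∑' l : ℤ, if k + 1 ≤ l then (U k) ((1 - P) ((Uinv (l + 1)) (f l))) else 0)
        = (∑' l : ℤ, if k ≤ l then (U k) ((1 - P) ((Uinv (l + 1)) (f l))) else 0)
          - (U k) ((1 - P) ((Uinv (k + 1)) (f k))) := by
      rw [tsum_congr hpt2, Summable.tsum_sub (hS2 k) (hsingle _), htsingle]
    -- pull out A k
    have hA1 : ∀ l : ℤ, (if l < k + 1 then (U (k + 1)) (P ((Uinv (l + 1)) (f l))) else 0)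
        = (A k) (if l < k + 1 then (U k) (P ((Uinv (l + 1)) (f l))) else 0) := by
      intro l
      by_cases h : l < k + 1
      · rw [if_pos h, if_pos h, hUrec k]; rfl
      · rw [if_neg h, if_neg h, map_zero]
    have hA2 : ∀ l : ℤ, (if k + 1 ≤ l then (U (k + 1)) ((1 - P) ((Uinv (l + 1)) (f l))) else 0)
        = (A k) (if k + 1 ≤ l then (U k) ((1 - P) ((Uinv (l + 1)) (f l))) else 0) := by
      intro l
      by_cases h : k + 1 ≤ l
      · rw [if_pos h, if_pos h, hUrec k]; rfl
      · rw [if_neg h, if_neg h, map_zero]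
    have hx : (A k) ((U k) (P ((Uinv (k + 1)) (f k))) + (U k) ((1 - P) ((Uinv (k + 1)) (f k))))
        = f k := by
      have h1 : (U k) (P ((Uinv (k + 1)) (f k))) + (U k) ((1 - P) ((Uinv (k + 1)) (f k)))
          = (U k) ((Uinv (k + 1)) (f k)) := by
        rw [← map_add]
        congr 1
        simp [ContinuousLinearMap.sub_apply]
      rw [h1]
      have h2 := congrArg (fun T : EuclideanSpace ℝ (Fin n) →L[ℝ] EuclideanSpace ℝ (Fin n) =>
        T (f k)) (hUinv₁ (k + 1))
      simp only [ContinuousLinearMap.comp_apply, ContinuousLinearMap.one_apply] at h2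
      have h3 := congrArg (fun T : EuclideanSpace ℝ (Fin n) →L[ℝ] EuclideanSpace ℝ (Fin n) =>
        T ((Uinv (k + 1)) (f k))) (hUrec k)
      simp only [ContinuousLinearMap.comp_apply] at h3
      rw [← h3]
      exact h2
    -- assemble
    show (∑' l : ℤ, if l < k + 1 then (U (k + 1)) (P ((Uinv (l + 1)) (f l))) else 0)
        - (∑' l : ℤ, if k + 1 ≤ l then (U (k + 1)) ((1 - P) ((Uinv (l + 1)) (f l))) else 0)
        = (A k) (dichSol U Uinv P f k) + f k
    rw [tsum_congr hA1, tsum_congr hA2, ← (A k).map_tsum hS1', ← (A k).map_tsum hS2',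
      T1, T2, ← map_sub]
    have hre : ((∑' l : ℤ, if l < k then (U k) (P ((Uinv (l + 1)) (f l))) else 0)
          + (U k) (P ((Uinv (k + 1)) (f k))))
        - ((∑' l : ℤ, if k ≤ l then (U k) ((1 - P) ((Uinv (l + 1)) (f l))) else 0)
          - (U k) ((1 - P) ((Uinv (k + 1)) (f k))))
        = ((∑' l : ℤ, if l < k then (U k) (P ((Uinv (l + 1)) (f l))) else 0)
          - (∑' l : ℤ, if k ≤ l then (U k) ((1 - P) ((Uinv (l + 1)) (f l))) else 0))
          + ((U k) (P ((Uinv (k + 1)) (f k))) + (U k) ((1 - P) ((Uinv (k + 1)) (f k)))) := by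
      abel
    rw [hre, map_add, hx]
    rfl
end
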